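/- Combining the previous two results: if p_t = softmax(W h_t + b) and p_{t−1} = softmax(W h_{t−1} + b), the observable-gain condition ‖ΠWu‖₂ ≥ σ_W‖u‖₂ holds, and κ > 0 lower-bounds the softmax Jacobian curvature on 𝟏^⊥ along the logit segment, then JSD(p_t, p_{t−1}) ≥ (κ²σ_W²/8)·‖h_t − h_{t−1}‖₂². -/

import Mathlib

open Real BigOperators Matrix

/-- Softmax on `ℝ^V`. -/
noncomputable def softmax {V : ℕ} (z : Fin V → ℝ) : Fin V → ℝ :=
  fun i => Real.exp (z i) / ∑ j, Real.exp (z j)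

/-- Softmax Jacobian `J(p) = diag(p) - p pᵀ`. -/
noncomputable def softmaxJac {V : ℕ} (p : Fin V → ℝ) : Matrix (Fin V) (Fin V) ℝ :=
  Matrix.diagonal p - Matrix.vecMulVec p p

/-- Orthogonal projection onto the subspace orthogonal to the all-ones vector. -/
noncomputable def projOne {V : ℕ} (v : Fin V → ℝ) : Fin V → ℝ :=
  fun i => v i - (∑ j, v j) / V

/-- KL divergence with the convention `0 * log 0 = 0`. -/
noncomputable def klDiv {α : Type*} [Fintype α] (P Q : α → ℝ) : ℝ :=
  ∑ x, if P x = 0 then 0 else P x * Real.log (P x / Q x)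

/-- Jensen–Shannon divergence with midpoint `M = (P+Q)/2`. -/
noncomputable def jsd {α : Type*} [Fintype α] (P Q : α → ℝ) : ℝ :=
  (1/2) * klDiv P (fun x => (P x + Q x) / 2) + (1/2) * klDiv Q (fun x => (P x + Q x) / 2)

open Set

/-!
Write `Δ = z₁ - z₀` for the change of logits. Along the segment `z₀ + s • Δ` the derivative of
`Δ ⬝ᵥ softmax (z₀ + s • Δ)` is the quadratic form `Δ ⬝ᵥ J(p(s)) Δ`, so by the mean value theorem
`Δ ⬝ᵥ (p_t - p_{t-1})` equals that form at an intermediate point. Because `J(p)` kills constant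
vectors and `p_t - p_{t-1}` sums to zero, `Δ` may be replaced by `v = ΠΔ = ΠW(h_t - h_{t-1})`.
The curvature bound and Cauchy–Schwarz then give `κ ‖v‖ ≤ ‖p_t - p_{t-1}‖`, and the gain condition
gives `σ_W ‖h_t - h_{t-1}‖ ≤ ‖v‖`. Finally `‖P - Q‖² ≤ 8 JSD(P, Q)` for vectors with entries in
`[0, 1]`: each summand of `2 JSD` is the midpoint Jensen gap of `x log x`, and `x log x - x² / 2` is
still convex on `[0, 1]`.
-/

lemma klDiv_eq_sum_mul_log {α : Type*} [Fintype α] (P Q : α → ℝ) :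
    klDiv P Q = ∑ x, P x * log (P x / Q x) :=
  Finset.sum_congr rfl fun x _ => by split_ifs with h <;> simp [h]

lemma convexOn_mul_log_sub_sq_div_two :
    ConvexOn ℝ (Icc 0 1) fun x : ℝ => x * log x - x ^ 2 / 2 := by
  have hderiv : ∀ x ∈ Ioo (0 : ℝ) 1,
      HasDerivAt (fun x : ℝ => x * log x - x ^ 2 / 2) (log x + 1 - x) x := fun x hx => by
    simpa using (hasDerivAt_mul_log hx.1.ne').fun_sub ((hasDerivAt_pow 2 x).div_const 2)
  refine MonotoneOn.convexOn_of_deriv (convex_Icc 0 1) (by fun_prop) ?_ ?_ <;>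
    rw [interior_Icc]
  · exact fun x hx => (hderiv x hx).differentiableAt.differentiableWithinAt
  · intro a ha b hb hab
    rw [(hderiv a ha).deriv, (hderiv b hb).deriv]
    -- `log (b / a) ≥ 1 - a / b = (b - a) / b ≥ b - a` because `b ≤ 1`
    have hlog := one_sub_inv_le_log_of_pos (div_pos hb.1 ha.1)
    rw [log_div hb.1.ne' ha.1.ne', inv_div, one_sub_div hb.1.ne'] at hlog
    have hshrink : b - a ≤ (b - a) / b := by
      rw [le_div_iff₀ hb.1]
      nlinarith [hb.2]
    linarith

lemma sq_sub_div_four_le_mul_log_add_mul_log {p q : ℝ} (hp : p ∈ Icc (0 : ℝ) 1)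
    (hq : q ∈ Icc (0 : ℝ) 1) :
    (p - q) ^ 2 / 4 ≤ p * log (p / ((p + q) / 2)) + q * log (q / ((p + q) / 2)) := by
  have hsplit : ∀ r : ℝ, 0 ≤ r → r ≤ p + q →
      r * log (r / ((p + q) / 2)) = r * log r - r * log ((p + q) / 2) := by
    intro r hr hrpq
    rcases hr.eq_or_lt with rfl | hr0
    · simp
    · rw [log_div hr0.ne' (by linarith), mul_sub]
  have hconv := convexOn_mul_log_sub_sq_div_two.2 hp hq (by norm_num : (0 : ℝ) ≤ 1 / 2)
    (by norm_num : (0 : ℝ) ≤ 1 / 2) (by norm_num)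
  simp only [smul_eq_mul] at hconv
  rw [show 1 / 2 * p + 1 / 2 * q = (p + q) / 2 by ring] at hconv
  rw [hsplit p hp.1 (by linarith [hq.1]), hsplit q hq.1 (by linarith [hp.1])]
  linarith

lemma sum_sq_sub_div_eight_le_jsd {α : Type*} [Fintype α] {P Q : α → ℝ}
    (hP : ∀ x, P x ∈ Icc (0 : ℝ) 1) (hQ : ∀ x, Q x ∈ Icc (0 : ℝ) 1) :
    (∑ x, (P x - Q x) ^ 2) / 8 ≤ jsd P Q := by
  rw [jsd, klDiv_eq_sum_mul_log, klDiv_eq_sum_mul_log, Finset.sum_div, Finset.mul_sum,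
    Finset.mul_sum, ← Finset.sum_add_distrib]
  gcongr with x
  linarith [sq_sub_div_four_le_mul_log_add_mul_log (hP x) (hQ x)]

section Softmax

variable {V : ℕ}

lemma sum_exp_pos [NeZero V] (z : Fin V → ℝ) : 0 < ∑ j, exp (z j) :=
  Finset.sum_pos (fun _ _ => exp_pos _) Finset.univ_nonempty

lemma softmax_pos [NeZero V] (z : Fin V → ℝ) (i : Fin V) : 0 < softmax z i :=
  div_pos (exp_pos _) (sum_exp_pos z)

lemma sum_softmax [NeZero V] (z : Fin V → ℝ) : ∑ i, softmax z i = 1 := by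
  simp only [softmax, ← Finset.sum_div]
  exact div_self (sum_exp_pos z).ne'

lemma softmax_le_one [NeZero V] (z : Fin V → ℝ) (i : Fin V) : softmax z i ≤ 1 :=
  sum_softmax z ▸ Finset.single_le_sum (fun j _ => (softmax_pos z j).le) (Finset.mem_univ i)

lemma softmaxJac_mulVec_apply (p w : Fin V → ℝ) (i : Fin V) :
    (softmaxJac p *ᵥ w) i = p i * (w i - p ⬝ᵥ w) := by
  simp only [softmaxJac, sub_mulVec, Pi.sub_apply, mulVec_diagonal, vecMulVec_mulVec,
    Pi.smul_apply, op_smul_eq_mul]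
  ring

lemma sum_softmaxJac_mulVec {p : Fin V → ℝ} (hp : ∑ i, p i = 1) (w : Fin V → ℝ) :
    ∑ i, (softmaxJac p *ᵥ w) i = 0 := by
  simp only [softmaxJac_mulVec_apply, mul_sub, Finset.sum_sub_distrib, ← Finset.sum_mul, hp]
  simp [dotProduct]

lemma softmaxJac_mulVec_projOne {p : Fin V → ℝ} (hp : ∑ i, p i = 1) (w : Fin V → ℝ) :
    softmaxJac p *ᵥ projOne w = softmaxJac p *ᵥ w := by
  ext i
  simp only [softmaxJac_mulVec_apply, projOne, dotProduct, mul_sub, Finset.sum_sub_distrib,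
    ← Finset.sum_mul, hp]
  ring

lemma sum_projOne [NeZero V] (w : Fin V → ℝ) : ∑ i, projOne w i = 0 := by
  simp [projOne, Finset.sum_sub_distrib, mul_div_cancel₀ _ (NeZero.ne (V : ℝ))]

lemma projOne_dotProduct {w x : Fin V → ℝ} (hx : ∑ i, x i = 0) : projOne w ⬝ᵥ x = w ⬝ᵥ x := by
  simp [projOne, dotProduct, sub_mul, Finset.sum_sub_distrib, ← Finset.mul_sum, hx]

lemma projOne_dotProduct_softmaxJac_mulVec_projOne {p : Fin V → ℝ} (hp : ∑ i, p i = 1)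
    (w : Fin V → ℝ) :
    projOne w ⬝ᵥ (softmaxJac p *ᵥ projOne w) = w ⬝ᵥ (softmaxJac p *ᵥ w) := by
  rw [softmaxJac_mulVec_projOne hp, projOne_dotProduct (sum_softmaxJac_mulVec hp w)]

lemma hasDerivAt_softmax_add_smul [NeZero V] (z Δ : Fin V → ℝ) (s : ℝ) :
    HasDerivAt (fun t : ℝ => softmax (z + t • Δ)) (softmaxJac (softmax (z + s • Δ)) *ᵥ Δ) s := by
  have hexp : ∀ j, HasDerivAt (fun t : ℝ => exp (z j + t * Δ j)) (exp (z j + s * Δ j) * Δ j) s :=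
    fun j => by simpa using (((hasDerivAt_id s).mul_const (Δ j)).const_add (z j)).exp
  have hsum := HasDerivAt.fun_sum (u := Finset.univ) fun j _ => hexp j
  refine hasDerivAt_pi.2 fun i => ?_
  have hD := (sum_exp_pos (z + s • Δ)).ne'
  simp only [Pi.add_apply, Pi.smul_apply, smul_eq_mul] at hD
  have hfun : (fun t : ℝ => softmax (z + t • Δ) i) =
      fun t => exp (z i + t * Δ i) / ∑ j, exp (z j + t * Δ j) := by
    ext t
    simp [softmax]
  rw [hfun]
  refine ((hexp i).fun_div hsum hD).congr_deriv ?_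
  rw [softmaxJac_mulVec_apply]
  simp only [softmax, dotProduct, Pi.add_apply, Pi.smul_apply, smul_eq_mul]
  field_simp
  rw [← Finset.sum_div, mul_sub, mul_div_cancel₀ _ hD]
  ring

lemma exists_dotProduct_softmax_sub_eq [NeZero V] (z₀ z₁ : Fin V → ℝ) :
    ∃ c ∈ Ioo (0 : ℝ) 1, (z₁ - z₀) ⬝ᵥ (softmax z₁ - softmax z₀) =
      (z₁ - z₀) ⬝ᵥ (softmaxJac (softmax (z₀ + c • (z₁ - z₀))) *ᵥ (z₁ - z₀)) := by
  set Δ := z₁ - z₀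
  have hderiv : ∀ s, HasDerivAt (fun t : ℝ => Δ ⬝ᵥ softmax (z₀ + t • Δ))
      (Δ ⬝ᵥ (softmaxJac (softmax (z₀ + s • Δ)) *ᵥ Δ)) s := fun s =>
    HasDerivAt.fun_sum fun i _ =>
      (hasDerivAt_pi.1 (hasDerivAt_softmax_add_smul z₀ Δ s) i).const_mul (Δ i)
  obtain ⟨c, hc, hslope⟩ := exists_hasDerivAt_eq_slope _ _ one_pos
    (fun s _ => (hderiv s).continuousAt.continuousWithinAt) fun s _ => hderiv s
  refine ⟨c, hc, ?_⟩
  rw [hslope, dotProduct_sub]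
  simp [Δ]

end Softmax

lemma sq_mul_sum_sq_le_of_mul_sum_sq_le_dotProduct {ι : Type*} [Fintype ι] {κ : ℝ} {v x : ι → ℝ}
    (hκ : 0 ≤ κ) (h : κ * ∑ i, v i ^ 2 ≤ v ⬝ᵥ x) : κ ^ 2 * ∑ i, v i ^ 2 ≤ ∑ i, x i ^ 2 := by
  have hv : 0 ≤ ∑ i, v i ^ 2 := Finset.sum_nonneg fun i _ => sq_nonneg _
  rcases hv.eq_or_lt with hv0 | hv0
  · rw [← hv0, mul_zero]
    exact Finset.sum_nonneg fun i _ => sq_nonneg _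
  have hcs : (κ * ∑ i, v i ^ 2) ^ 2 ≤ (∑ i, v i ^ 2) * ∑ i, x i ^ 2 :=
    (pow_le_pow_left₀ (by positivity) h 2).trans (Finset.sum_mul_sq_le_sq_mul_sq _ v x)
  refine le_of_mul_le_mul_left ?_ hv0
  linarith

/-- Observable instability lower-bounds internal step change:
JSD(p_t, p_{t-1}) ≥ (κ² σ_W² / 8) ‖h_t - h_{t-1}‖₂². -/
theorem jsd_lower_bounds_state_change {V d : ℕ} (hV : 0 < V)
    (W : Matrix (Fin V) (Fin d) ℝ) (b : Fin V → ℝ)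
    (σW : ℝ) (hσpos : 0 < σW)
    (hgain : ∀ u : Fin d → ℝ,
      σW * Real.sqrt (∑ i, u i ^ 2) ≤ Real.sqrt (∑ i, projOne (W *ᵥ u) i ^ 2))
    (ht htm : Fin d → ℝ) (κ : ℝ) (hκpos : 0 < κ)
    (hκ : ∀ s ∈ Set.Icc (0:ℝ) 1, ∀ v : Fin V → ℝ, (∑ i, v i) = 0 →
      κ * ∑ i, v i ^ 2 ≤
        v ⬝ᵥ (softmaxJac (softmax ((W *ᵥ htm + b) + s • ((W *ᵥ ht + b) - (W *ᵥ htm + b)))) *ᵥ v)) :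
    κ ^ 2 * σW ^ 2 / 8 * ∑ i, (ht i - htm i) ^ 2 ≤
      jsd (softmax (W *ᵥ ht + b)) (softmax (W *ᵥ htm + b)) := by
  have : NeZero V := ⟨hV.ne'⟩
  set z₀ := W *ᵥ htm + b
  set z₁ := W *ᵥ ht + b
  set v := projOne (z₁ - z₀)
  have hlogits : W *ᵥ (ht - htm) = z₁ - z₀ := by
    simp only [z₀, z₁, mulVec_sub]; abel
  have hgain_sq : σW ^ 2 * ∑ i, (ht i - htm i) ^ 2 ≤ ∑ i, v i ^ 2 := by
    have h := hgain (ht - htm)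
    rw [hlogits, ← sqrt_sq hσpos.le, ← sqrt_mul (sq_nonneg _),
      sqrt_le_sqrt_iff (Finset.sum_nonneg fun i _ => sq_nonneg _)] at h
    exact h
  obtain ⟨c, hc, hmvt⟩ := exists_dotProduct_softmax_sub_eq z₀ z₁
  have hcurv : κ * ∑ i, v i ^ 2 ≤ v ⬝ᵥ (softmax z₁ - softmax z₀) := by
    have h := hκ c (Ioo_subset_Icc_self hc) v (sum_projOne _)
    have hsum : ∑ i, (softmax z₁ - softmax z₀) i = 0 := by
      simp [Finset.sum_sub_distrib, sum_softmax]
    rwa [projOne_dotProduct_softmaxJac_mulVec_projOne (sum_softmax _), ← hmvt,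
      ← projOne_dotProduct hsum] at h
  have hlip := sq_mul_sum_sq_le_of_mul_sum_sq_le_dotProduct hκpos.le hcurv
  calc κ ^ 2 * σW ^ 2 / 8 * ∑ i, (ht i - htm i) ^ 2
      = κ ^ 2 * (σW ^ 2 * ∑ i, (ht i - htm i) ^ 2) / 8 := by ring
    _ ≤ κ ^ 2 * (∑ i, v i ^ 2) / 8 := by gcongr
    _ ≤ (∑ i, (softmax z₁ i - softmax z₀ i) ^ 2) / 8 := by gcongr; exact hlip
    _ ≤ jsd (softmax z₁) (softmax z₀) :=
      sum_sq_sub_div_eight_le_jsd (fun i => ⟨(softmax_pos z₁ i).le, softmax_le_one z₁ i⟩)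
        fun i => ⟨(softmax_pos z₀ i).le, softmax_le_one z₀ i⟩
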